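/- Let m ≥ 3 and let θ₁,…,θ_m be rational numbers with θ₁ + ⋯ + θ_m = 2. Call a tuple v = (v₁,…,v_m) of vectors in ℂ² θ-stable if for every ℂ-linear subspace W ⊆ ℂ² and every subset S ⊆ {1,…,m} such that vᵢ ∈ W for all i ∈ S, if (S,W) ≠ (∅,{0}) and (S,W) ≠ ({1,…,m},ℂ²), then ∑_{i∈S} θᵢ < dim_ℂ W. Then a θ-stable tuple v ∈ (ℂ²)^m exists if and only if 0 < θᵢ < 1 for every i = 1,…,m. -/

import Mathlib

/-!
Positivity of `θ i` is forced by the pair `(univ.erase i, ℂ²)` and `θ i < 1` by `({i}, ℂ ∙ vᵢ)`.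
Conversely, if `0 < θᵢ < 1`, any `m` pairwise independent vectors are stable: a line contains
at most one of them, and the whole plane contains a proper subset of them, whose weight is less
than `∑ θᵢ = 2`.
-/

open Module

variable {ι K V : Type*} [Fintype ι] [Field K] [AddCommGroup V] [Module K V]

variable (K) in
def IsThetaStable (θ : ι → ℚ) (v : ι → V) : Prop :=
  ∀ (W : Submodule K V) (S : Finset ι), (∀ i ∈ S, v i ∈ W) →
    ¬(S = ∅ ∧ W = ⊥) → ¬(S = Finset.univ ∧ W = ⊤) → ∑ i ∈ S, θ i < (finrank K W : ℚ)

namespace IsThetaStable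

variable {θ : ι → ℚ} {v : ι → V}

theorem pos [Nontrivial V] (hv : IsThetaStable K θ v) (hsum : ∑ i, θ i = finrank K V)
    (i : ι) : 0 < θ i := by
  classical
  have h := hv ⊤ (Finset.univ.erase i) (fun _ _ ↦ trivial)
    (fun h ↦ bot_ne_top h.2.symm) (fun h ↦ by simpa using h.1.ge (Finset.mem_univ i))
  rw [finrank_top, ← hsum, ← Finset.sum_erase_add _ _ (Finset.mem_univ i)] at h
  linarith

theorem lt_one [Nontrivial ι] (hv : IsThetaStable K θ v) (i : ι) : θ i < 1 := by
  obtain ⟨j, hji⟩ := exists_ne i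
  have h := hv (K ∙ v i) {i} (by simp [Submodule.mem_span_singleton_self])
    (by simp) (fun h ↦ hji (Finset.mem_singleton.mp (h.1 ▸ Finset.mem_univ j)))
  have hrank : finrank K (K ∙ v i) ≤ 1 := (finrank_span_le_card {v i}).trans (by simp)
  rw [Finset.sum_singleton] at h
  exact h.trans_le (by exact_mod_cast hrank)

end IsThetaStable

theorem Submodule.eq_top_of_linearIndependent_pair (hV : finrank K V = 2) {W : Submodule K V}
    {x y : V} (hxy : LinearIndependent K ![x, y]) (hx : x ∈ W) (hy : y ∈ W) : W = ⊤ := by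
  have : FiniteDimensional K V := Module.finite_of_finrank_eq_succ hV
  rw [eq_top_iff, ← hxy.span_eq_top_of_card_eq_finrank (by simp [hV]), Submodule.span_le]
  rintro _ ⟨k, rfl⟩
  fin_cases k
  exacts [hx, hy]

theorem isThetaStable_of_pairwise_linearIndependent {θ : ι → ℚ} {v : ι → V}
    (hV : finrank K V = 2) (hsum : ∑ i, θ i = 2) (hθ : ∀ i, 0 < θ i ∧ θ i < 1)
    (hv0 : ∀ i, v i ≠ 0) (hind : Pairwise fun i j ↦ LinearIndependent K ![v i, v j]) :
    IsThetaStable K θ v := by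
  have : FiniteDimensional K V := Module.finite_of_finrank_eq_succ hV
  intro W S hmem hne_bot hne_top
  have hle : finrank K W ≤ 2 := hV ▸ Submodule.finrank_le W
  interval_cases hr : finrank K W
  · have hW : W = ⊥ := Submodule.finrank_eq_zero.mp hr
    refine absurd ⟨Finset.eq_empty_of_forall_notMem fun i hi ↦ hv0 i ?_, hW⟩ hne_bot
    simpa [hW] using hmem i hi
  · rcases S.eq_empty_or_nonempty with rfl | ⟨i, hi⟩
    · simp
    have hS : S = {i} := by
      refine Finset.eq_singleton_iff_unique_mem.mpr ⟨hi, fun j hj ↦ ?_⟩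
      by_contra hji
      have hW := Submodule.eq_top_of_linearIndependent_pair hV (hind hji) (hmem j hj) (hmem i hi)
      rw [hW, finrank_top, hV] at hr
      exact absurd hr (by decide)
    rw [hS, Finset.sum_singleton]
    exact_mod_cast (hθ i).2
  · have hW : W = ⊤ := Submodule.eq_top_of_finrank_eq (hr.trans hV.symm)
    obtain ⟨j, hj⟩ : ∃ j, j ∉ S := by
      by_contra! h
      exact hne_top ⟨Finset.eq_univ_of_forall h, hW⟩
    have := Finset.sum_lt_sum_of_subset S.subset_univ (Finset.mem_univ j) hj
      (hθ j).1 (fun k _ _ ↦ (hθ k).1.le)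
    rw [hsum] at this
    exact_mod_cast this

theorem linearIndependent_pair_one_of_ne {a b : K} (hab : a ≠ b) :
    LinearIndependent K ![![1, a], ![1, b]] := by
  rw [LinearIndependent.pair_iff' (by simp)]
  intro c hc
  have h0 := congrFun hc 0
  have h1 := congrFun hc 1
  simp only [Fin.isValue, Pi.smul_apply, Matrix.cons_val_zero, smul_eq_mul, mul_one,
    Matrix.cons_val_one, Matrix.cons_val_fin_one] at h0 h1
  exact hab (by rw [← h1, h0, one_mul])

theorem stmt0 (m : ℕ) (hm : 3 ≤ m) (θ : Fin m → ℚ) (hsum : ∑ i, θ i = 2) :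
    (∃ v : Fin m → (Fin 2 → ℂ),
      ∀ (W : Submodule ℂ (Fin 2 → ℂ)) (S : Finset (Fin m)),
        (∀ i ∈ S, v i ∈ W) →
        ¬(S = ∅ ∧ W = ⊥) → ¬(S = Finset.univ ∧ W = ⊤) →
        ∑ i ∈ S, θ i < (Module.finrank ℂ W : ℚ)) ↔
    (∀ i, 0 < θ i ∧ θ i < 1) := by
  have : Nontrivial (Fin m) := Fin.nontrivial_iff_two_le.mpr (by omega)
  constructor
  · rintro ⟨v, hv⟩ i
    exact ⟨IsThetaStable.pos hv (by simp [hsum]) i, IsThetaStable.lt_one hv i⟩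
  · intro hθ
    refine ⟨fun i ↦ ![1, (i : ℂ)], isThetaStable_of_pairwise_linearIndependent (by simp) hsum hθ
      (fun i h ↦ by simpa using congrFun h 0) fun i j hij ↦ ?_⟩
    exact linearIndependent_pair_one_of_ne (by exact_mod_cast Fin.val_injective.ne hij)
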